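/- A symmetric tensor A of order m and dimension n is copositive if and only if no principal sub-tensor of A has a negative H^{++}-eigenvalue, i.e., no principal sub-tensor B of A admits λ < 0 and a strictly positive vector v with B v^{m-1} = λ v^{[m-1]}. -/

import Mathlib

open Finset

/-- `A x^m` for an `m`-order `n`-dimensional tensor `A`. -/
noncomputable def tpow {m n : ℕ} (A : (Fin m → Fin n) → ℝ) (x : Fin n → ℝ) : ℝ :=
  ∑ f : Fin m → Fin n, A f * ∏ k, x (f k)

/-- `A` is symmetric: entries invariant under permutations of indices. -/
def SymT {m n : ℕ} (A : (Fin m → Fin n) → ℝ) : Prop :=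
  ∀ (σ : Equiv.Perm (Fin m)) (f : Fin m → Fin n), A (f ∘ σ) = A f

/-- `A` is copositive. -/
def CoposT {m n : ℕ} (A : (Fin m → Fin n) → ℝ) : Prop :=
  ∀ x : Fin n → ℝ, (∀ i, 0 ≤ x i) → 0 ≤ tpow A x

/-- `A` is strictly copositive. -/
def StrictCoposT {m n : ℕ} (A : (Fin m → Fin n) → ℝ) : Prop :=
  ∀ x : Fin n → ℝ, (∀ i, 0 ≤ x i) → x ≠ 0 → 0 < tpow A x

/-- `(A_S x^{m-1})_i` : the `i`-th component of the contraction of the principal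
sub-tensor of `A` on the index set `S` with `x` taken `m-1` times. -/
noncomputable def tcontr {m n : ℕ} (hm : 0 < m) (A : (Fin m → Fin n) → ℝ)
    (S : Finset (Fin n)) (x : Fin n → ℝ) (i : Fin n) : ℝ :=
  ∑ f ∈ Finset.univ.filter
      (fun f : Fin m → Fin n => f ⟨0, hm⟩ = i ∧ ∀ k, f k ∈ S),
    A f * ∏ k ∈ Finset.univ.erase (⟨0, hm⟩ : Fin m), x (f k)

/-!
If `v > 0` is an eigenvector of `A_S` for `λ < 0`, extending `v` by zero gives a nonnegative
`w` with `A w^m = λ ∑_{i ∈ S} v_i^m < 0`. Conversely, if `A` is not copositive, a nonnegative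
minimiser `x` of `A x^m / ∑ x_i^m` has a negative minimum `λ`. On the support `S` of `x` every
coordinate can be moved in both directions, and for symmetric `A` the partial derivative
`∂_i (A x^m)` is `m (A x^{m-1})_i`, so the first-order conditions say that `x` restricted to `S`
is an `H^{++}`-eigenvector of `A_S` for `λ`.
-/

section

variable {m n : ℕ}

lemma tpow_smul (A : (Fin m → Fin n) → ℝ) (c : ℝ) (x : Fin n → ℝ) :
    tpow A (c • x) = c ^ m * tpow A x := by
  simp only [tpow, Pi.smul_apply, smul_eq_mul, prod_mul_distrib, prod_const, card_univ,
    Fintype.card_fin, mul_sum]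
  exact sum_congr rfl fun f _ => by ring

lemma tpow_zero (hm : m ≠ 0) (A : (Fin m → Fin n) → ℝ) : tpow A 0 = 0 := by
  simpa [zero_pow hm] using tpow_smul A 0 0

lemma continuous_tpow (A : (Fin m → Fin n) → ℝ) : Continuous (tpow A) :=
  continuous_finsetSum _ fun f _ =>
    continuous_const.mul (continuous_finsetProd _ fun k _ => continuous_apply (f k))

lemma sum_pow_smul {ι : Type*} [Fintype ι] (c : ℝ) (x : ι → ℝ) :
    ∑ i, (c • x) i ^ m = c ^ m * ∑ i, x i ^ m := by
  simp only [Pi.smul_apply, smul_eq_mul, mul_pow, mul_sum]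

lemma sum_pow_pos {ι : Type*} [Fintype ι] {x : ι → ℝ} (hx : ∀ i, 0 ≤ x i)
    (hx_ne : x ≠ 0) : 0 < ∑ i, x i ^ m := by
  obtain ⟨i, hi⟩ := Function.ne_iff.mp hx_ne
  exact sum_pos' (fun j _ => pow_nonneg (hx j) m)
    ⟨i, mem_univ i, pow_pos ((hx i).lt_of_ne' hi) m⟩

lemma tcontr_univ (hm : 0 < m) (A : (Fin m → Fin n) → ℝ) (x : Fin n → ℝ) (i : Fin n) :
    tcontr hm A univ x i =
      ∑ f with f ⟨0, hm⟩ = i, A f * ∏ k ∈ univ.erase ⟨0, hm⟩, x (f k) := by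
  simp [tcontr]

lemma tpow_eq_sum_mul_tcontr_univ (hm : 0 < m) (A : (Fin m → Fin n) → ℝ) (x : Fin n → ℝ) :
    tpow A x = ∑ i, x i * tcontr hm A univ x i := by
  simp only [tcontr_univ, mul_sum]
  rw [tpow, ← sum_fiberwise univ (fun f : Fin m → Fin n => f ⟨0, hm⟩)]
  refine sum_congr rfl fun i _ => sum_congr rfl fun f hf => ?_
  rw [(mem_filter.mp hf).2.symm, ← mul_prod_erase univ (fun k => x (f k)) (mem_univ _)]
  ring

lemma tcontr_univ_eq_tcontr (hm : 0 < m) (A : (Fin m → Fin n) → ℝ) {S : Finset (Fin n)}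
    {x : Fin n → ℝ} (hx : ∀ j ∉ S, x j = 0) {i : Fin n} (hi : i ∈ S) :
    tcontr hm A univ x i = tcontr hm A S x i := by
  rw [tcontr_univ, tcontr]
  refine (sum_subset (monotone_filter_right _ fun f _ h => h.1) fun f hf hfS => ?_).symm
  simp only [mem_filter, mem_univ, true_and, not_and, not_forall] at hf hfS
  obtain ⟨k, hk⟩ := hfS hf
  have hk0 : k ≠ ⟨0, hm⟩ := by
    rintro rfl
    exact hk (hf ▸ hi)
  rw [prod_eq_zero (mem_erase.mpr ⟨hk0, mem_univ k⟩) (hx _ hk), mul_zero]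

lemma tcontr_congr (hm : 0 < m) (A : (Fin m → Fin n) → ℝ) (S : Finset (Fin n))
    {x y : Fin n → ℝ} (h : ∀ j ∈ S, x j = y j) (i : Fin n) :
    tcontr hm A S x i = tcontr hm A S y i :=
  sum_congr rfl fun f hf => by
    rw [prod_congr rfl fun k _ => h _ ((mem_filter.mp hf).2.2 k)]

lemma tpow_piecewise_zero (hm : 0 < m) (A : (Fin m → Fin n) → ℝ) (S : Finset (Fin n))
    (v : Fin n → ℝ) :
    tpow A (S.piecewise v 0) = ∑ i ∈ S, v i * tcontr hm A S v i := by
  have hzero : ∀ j ∉ S, S.piecewise v 0 j = 0 := fun j hj => S.piecewise_eq_of_notMem _ _ hj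
  rw [tpow_eq_sum_mul_tcontr_univ hm, ← sum_subset (subset_univ S) fun j _ hj => by
    rw [hzero j hj, zero_mul]]
  refine sum_congr rfl fun i hi => ?_
  rw [S.piecewise_eq_of_mem _ _ hi, tcontr_univ_eq_tcontr hm A hzero hi,
    tcontr_congr hm A S fun j hj => S.piecewise_eq_of_mem _ _ hj]

lemma sum_filter_apply_eq_tcontr_univ (hm : 0 < m) {A : (Fin m → Fin n) → ℝ} (hA : SymT A)
    (x : Fin n → ℝ) (i : Fin n) (k : Fin m) :
    ∑ f with f k = i, A f * ∏ k' ∈ univ.erase k, x (f k') = tcontr hm A univ x i := by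
  set σ := Equiv.swap (⟨0, hm⟩ : Fin m) k
  rw [tcontr_univ]
  refine sum_nbij' (· ∘ σ) (· ∘ σ) (by simp [σ]) (by simp [σ]) (by simp [σ, Function.comp_def])
    (by simp [σ, Function.comp_def]) fun f _ => ?_
  rw [hA σ f]
  congr 1
  refine prod_nbij' σ σ (by simp [σ, Equiv.swap_apply_eq_iff])
    (by simp [σ, Equiv.swap_apply_eq_iff]) (by simp [σ]) (by simp [σ]) fun k' _ => ?_
  simp [σ]

lemma hasDerivAt_add_smul_apply {ι : Type*} (x d : ι → ℝ) (j : ι) :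
    HasDerivAt (fun t : ℝ => (x + t • d) j) (d j) 0 := by
  simpa using ((hasDerivAt_id (0 : ℝ)).mul_const (d j)).const_add (x j)

lemma hasDerivAt_tpow_add_smul_single (hm : 0 < m) {A : (Fin m → Fin n) → ℝ} (hA : SymT A)
    (x : Fin n → ℝ) (i : Fin n) :
    HasDerivAt (fun t : ℝ => tpow A (x + t • Pi.single i 1)) (m * tcontr hm A univ x i) 0 := by
  refine (HasDerivAt.fun_sum fun f (_ : f ∈ univ) =>
    (HasDerivAt.fun_finsetProd (u := univ) fun k _ =>
      hasDerivAt_add_smul_apply x (Pi.single i 1) (f k)).const_mul (A f)).congr_deriv ?_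
  simp only [zero_smul, add_zero, smul_eq_mul, Pi.single_apply, mul_ite, mul_one, mul_zero,
    mul_sum]
  rw [sum_comm]
  simp only [← sum_filter, sum_filter_apply_eq_tcontr_univ hm hA, sum_const, card_univ,
    Fintype.card_fin, nsmul_eq_mul]

lemma hasDerivAt_sum_pow_add_smul_single {ι : Type*} [Fintype ι] [DecidableEq ι] (x : ι → ℝ)
    (i : ι) (m : ℕ) :
    HasDerivAt (fun t : ℝ => ∑ j, (x + t • Pi.single i 1 : ι → ℝ) j ^ m)
      (m * x i ^ (m - 1)) 0 := by
  refine (HasDerivAt.fun_sum fun j (_ : j ∈ univ) =>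
    (hasDerivAt_add_smul_apply x (Pi.single i 1) j).pow m).congr_deriv ?_
  simp [Pi.single_apply]

lemma exists_forall_mul_sum_pow_le_tpow [Nonempty (Fin n)] (hm : m ≠ 0)
    (A : (Fin m → Fin n) → ℝ) :
    ∃ (lam : ℝ) (x : Fin n → ℝ), (∀ i, 0 ≤ x i) ∧ x ≠ 0 ∧ tpow A x = lam * ∑ i, x i ^ m ∧
      ∀ y : Fin n → ℝ, (∀ i, 0 ≤ y i) → lam * ∑ i, y i ^ m ≤ tpow A y := by
  -- `R` is invariant under positive scaling, so it suffices to minimise it on the simplex.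
  set R : (Fin n → ℝ) → ℝ := fun y => tpow A y / ∑ i, y i ^ m
  have hne (z : Fin n → ℝ) (hz : z ∈ stdSimplex ℝ (Fin n)) : z ≠ 0 := by
    rintro rfl
    simpa using hz.2
  have hpos (z : Fin n → ℝ) (hz : z ∈ stdSimplex ℝ (Fin n)) : 0 < ∑ i, z i ^ m :=
    sum_pow_pos hz.1 (hne z hz)
  obtain ⟨x, hx, hmin⟩ := (isCompact_stdSimplex ℝ (Fin n)).exists_isMinOn
    ⟨_, single_mem_stdSimplex ℝ (Classical.arbitrary (Fin n))⟩
    ((continuous_tpow A).continuousOn.div (by fun_prop) fun z hz => (hpos z hz).ne')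
  refine ⟨R x, x, hx.1, hne x hx, (div_mul_cancel₀ _ (hpos x hx).ne').symm, fun y hy => ?_⟩
  rcases eq_or_ne y 0 with rfl | hy0
  · simp [tpow_zero hm, zero_pow hm]
  have hs : 0 < ∑ i, y i := by
    simpa using sum_pow_pos (m := 1) hy hy0
  have hz : (∑ i, y i)⁻¹ • y ∈ stdSimplex ℝ (Fin n) :=
    ⟨fun i => smul_nonneg (inv_nonneg.mpr hs.le) (hy i), by
      simp only [Pi.smul_apply, smul_eq_mul, ← mul_sum, inv_mul_cancel₀ hs.ne']⟩
  have hR : R ((∑ i, y i)⁻¹ • y) = R y := by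
    simp only [R, tpow_smul, sum_pow_smul]
    exact mul_div_mul_left _ _ (pow_ne_zero _ (inv_ne_zero hs.ne'))
  have hy_pos := sum_pow_pos (m := m) hy hy0
  calc R x * ∑ i, y i ^ m ≤ R y * ∑ i, y i ^ m :=
        mul_le_mul_of_nonneg_right (hR ▸ hmin hz) hy_pos.le
    _ = tpow A y := div_mul_cancel₀ _ hy_pos.ne'

lemma tcontr_univ_eq_of_forall_mul_sum_pow_le_tpow (hm : 0 < m) {A : (Fin m → Fin n) → ℝ}
    (hA : SymT A) {lam : ℝ} {x : Fin n → ℝ} (hx : ∀ i, 0 ≤ x i)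
    (heq : tpow A x = lam * ∑ i, x i ^ m)
    (hmin : ∀ y : Fin n → ℝ, (∀ i, 0 ≤ y i) → lam * ∑ i, y i ^ m ≤ tpow A y)
    {i : Fin n} (hi : 0 < x i) :
    tcontr hm A univ x i = lam * x i ^ (m - 1) := by
  set φ : ℝ → ℝ := fun t =>
    tpow A (x + t • Pi.single i 1) - lam * ∑ j, (x + t • Pi.single i 1 : Fin n → ℝ) j ^ m
  have hloc : IsLocalMin φ 0 := by
    filter_upwards [Metric.ball_mem_nhds 0 hi] with t ht
    have hnn (j : Fin n) : 0 ≤ (x + t • Pi.single i 1 : Fin n → ℝ) j := by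
      rcases eq_or_ne j i with rfl | hj
      · simp only [Pi.add_apply, Pi.smul_apply, Pi.single_eq_same, smul_eq_mul, mul_one]
        linarith [(abs_lt.mp (mem_ball_zero_iff.mp ht)).1]
      · simpa [Pi.single_eq_of_ne hj] using hx j
    simp only [φ, zero_smul, add_zero, heq, sub_self]
    linarith [hmin _ hnn]
  have hderiv := hloc.hasDerivAt_eq_zero ((hasDerivAt_tpow_add_smul_single hm hA x i).sub
    ((hasDerivAt_sum_pow_add_smul_single x i m).const_mul lam))
  have hm' : (m : ℝ) ≠ 0 := by positivity
  apply mul_left_cancel₀ hm'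
  linarith

lemma not_coposT_of_tcontr_eq (hm : 0 < m) {A : (Fin m → Fin n) → ℝ} {S : Finset (Fin n)}
    {lam : ℝ} {v : Fin n → ℝ} (hS : S.Nonempty) (hlam : lam < 0) (hv : ∀ i ∈ S, 0 < v i)
    (heig : ∀ i ∈ S, tcontr hm A S v i = lam * v i ^ (m - 1)) :
    ¬ CoposT A := by
  intro hcop
  have hw (j : Fin n) : 0 ≤ S.piecewise v 0 j := by
    by_cases hj : j ∈ S <;> simp [hj, (hv j _).le]
  have hval : tpow A (S.piecewise v 0) = lam * ∑ i ∈ S, v i ^ m := by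
    rw [tpow_piecewise_zero hm, mul_sum]
    exact sum_congr rfl fun i hi => by rw [heig i hi, ← mul_pow_sub_one hm.ne' (v i)]; ring
  exact (hcop _ hw).not_gt
    (hval ▸ mul_neg_of_neg_of_pos hlam (sum_pos (fun i hi => pow_pos (hv i hi) m) hS))

end

theorem stmt7 {m n : ℕ} (hm : 0 < m) (A : (Fin m → Fin n) → ℝ) (hA : SymT A) :
    CoposT A ↔
      ¬ ∃ (S : Finset (Fin n)) (lam : ℝ) (v : Fin n → ℝ),
        S.Nonempty ∧ lam < 0 ∧ (∀ i ∈ S, 0 < v i) ∧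
        ∀ i ∈ S, tcontr hm A S v i = lam * v i ^ (m - 1) := by
  constructor
  · rintro hcop ⟨S, lam, v, hS, hlam, hv, heig⟩
    exact not_coposT_of_tcontr_eq hm hS hlam hv heig hcop
  · intro hno x₀ hx₀
    by_contra hneg
    push Not at hneg
    have hx₀_ne : x₀ ≠ 0 := by
      rintro rfl
      simp [tpow_zero hm.ne'] at hneg
    have : Nonempty (Fin n) := ⟨(Function.ne_iff.mp hx₀_ne).choose⟩
    obtain ⟨lam, x, hx, hx_ne, heq, hmin⟩ := exists_forall_mul_sum_pow_le_tpow hm.ne' A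
    have hlam : lam < 0 :=
      neg_of_mul_neg_left ((hmin x₀ hx₀).trans_lt hneg) (sum_pow_pos hx₀ hx₀_ne).le
    set S := univ.filter (0 < x ·)
    have hS (j : Fin n) (hj : j ∉ S) : x j = 0 := by
      simpa [S, (hx j).ge_iff_eq'] using hj
    refine hno ⟨S, lam, x, ?_, hlam, fun i hi => (mem_filter.mp hi).2, fun i hi => ?_⟩
    · obtain ⟨i, hi⟩ := Function.ne_iff.mp hx_ne
      exact ⟨i, mem_filter.mpr ⟨mem_univ i, (hx i).lt_of_ne' hi⟩⟩
    · rw [← tcontr_univ_eq_tcontr hm A hS hi]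
      exact tcontr_univ_eq_of_forall_mul_sum_pow_le_tpow hm hA hx heq hmin (mem_filter.mp hi).2
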